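/- Let G be a countable, locally finite graph, let β ∈ [0,∞], and let Q be an augmented β-arboreal gas Gibbs measure on G. If X ∈ 𝒯 is a tail event with Q(X) > 0, then the conditioned measure Q(·|X) is also an augmented β-arboreal gas Gibbs measure on G. -/

import Mathlib

open MeasureTheory
open scoped ENNReal symmDiff

noncomputable section

namespace ArborealGas

variable {V : Type*} (G : SimpleGraph V)

/-- The (inner vertex) boundary of a subgraph `H` relative to the host subgraph `Γ` of `G`:
the vertices of `H` incident to an edge of `Γ` not belonging to `H`. -/
def bdry (Γ H : G.Subgraph) : Set V :=
  {v | v ∈ H.verts ∧ ∃ u, Γ.Adj v u ∧ ¬ H.Adj v u}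

/-- Restriction of a relation to pairs inside a set. -/
def restrictRel (B : Set V) (φ : V → V → Prop) : V → V → Prop :=
  fun a b => a ∈ B ∧ b ∈ B ∧ φ a b

/-- `u` and `v` are connected in the quotient graph `F/φ` (the graph obtained from
`F` by identifying vertices of `F` lying in a common class of `φ`). -/
def quotConn (F : G.Subgraph) (φ : V → V → Prop) : V → V → Prop :=
  Relation.ReflTransGen fun a b =>
    F.Adj a b ∨ (a ∈ F.verts ∧ b ∈ F.verts ∧ φ a b)

/-- `F` extends the boundary condition `φ` (an equivalence relation on the boundary of `H`
in the host `Γ`): the quotient `F/φ` is acyclic, i.e. every edge of `F` is a bridge of `F/φ`. -/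
def Extends (Γ H : G.Subgraph) (φ : V → V → Prop) (F : G.Subgraph) : Prop :=
  ∀ a b, F.Adj a b →
    ¬ quotConn G (F.deleteEdges {s(a, b)}) (restrictRel (bdry G Γ H) φ) a b

/-- `F` is a spanning forest of `H` extending the boundary condition `φ`:
an element of `𝓕(H,φ)` containing every vertex of `H`. -/
def IsSpanningForestExtending (Γ H : G.Subgraph) (φ : V → V → Prop) (F : G.Subgraph) : Prop :=
  F ≤ H ∧ F.verts = H.verts ∧ Extends G Γ H φ F

/-- `F` is an `(H,φ)`-maximal spanning forest: no edge of `H` can be added to `F`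
while remaining a spanning forest extending `φ`. -/
def IsMaximalSpanningForestExtending (Γ H : G.Subgraph) (φ : V → V → Prop)
    (F : G.Subgraph) : Prop :=
  IsSpanningForestExtending G Γ H φ F ∧
    ∀ a b, (hab : H.Adj a b) → ¬ F.Adj a b →
      ¬ IsSpanningForestExtending G Γ H φ (F ⊔ G.subgraphOfAdj (H.adj_sub hab))

open Classical in
/-- The unnormalized arboreal gas weight `β ^ |F|` of a spanning forest `F` of `H`
extending `φ` (with the convention `0 ^ 0 = 1`); for `β = ∞` the uniform weight on
`(H,φ)`-maximal spanning forests. -/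
def gibbsWeight (β : ℝ≥0∞) (Γ H : G.Subgraph) (φ : V → V → Prop) (F : G.Subgraph) : ℝ≥0∞ :=
  if β = ⊤ then (if IsMaximalSpanningForestExtending G Γ H φ F then 1 else 0)
  else if IsSpanningForestExtending G Γ H φ F then β ^ F.edgeSet.ncard else 0

/-- The σ-algebra on the space of subgraphs of `G`: the product (cylinder) σ-algebra,
generated by the vertex- and edge-membership maps. -/
instance subgraphMeasurableSpace : MeasurableSpace G.Subgraph :=
  MeasurableSpace.comap
    (fun S => ((fun v => v ∈ S.verts), S.Adj) :
      G.Subgraph → (V → Prop) × (V → V → Prop)) inferInstance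

/-- The finite-volume `β`-arboreal gas Gibbs measure `P^φ_{H,β}` on the finite subgraph `H`
of the host graph `Γ` with boundary condition `φ`, regarded as a measure on subgraphs of `G`:
each spanning forest `F` of `H` extending `φ` gets probability proportional to `β ^ |F|`
(uniform on `(H,φ)`-maximal spanning forests when `β = ∞`). -/
def finGibbs (β : ℝ≥0∞) (Γ H : G.Subgraph) (φ : V → V → Prop) : Measure G.Subgraph :=
  (∑' F : G.Subgraph, gibbsWeight G β Γ H φ F)⁻¹ •
    Measure.sum fun F : G.Subgraph => gibbsWeight G β Γ H φ F • Measure.dirac F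

/-- The raw space in which augmented subgraphs of `G` live: pairs `(S, Φ)` of a subgraph `S`
of `G` and a boundary map `Φ` assigning to each (finite) subgraph `H` a relation on `V`.
It carries the product Borel σ-algebra. -/
abbrev AugSub := G.Subgraph × (G.Subgraph → V → V → Prop)

/-- `φ` is an equivalence relation on the set `B` (relating only elements of `B`). -/
def IsEquivRelOn (B : Set V) (φ : V → V → Prop) : Prop :=
  (∀ u v, φ u v → u ∈ B ∧ v ∈ B) ∧ (∀ u ∈ B, φ u u) ∧
    (∀ u v, φ u v → φ v u) ∧ (∀ u v w, φ u v → φ v w → φ u w)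

/-- `(S, Φ)` is an augmented subgraph of the host graph `Γ ≤ G`: `S ≤ Γ`, for each finite
subgraph `H` of `Γ` the relation `Φ(H)` is an equivalence relation on the boundary `∂H`,
and the consistency condition holds: for finite subgraphs `H ⊆ K` of `Γ` and `u, v ∈ ∂H`,
`u` and `v` are `Φ(H)`-related iff they are connected in `((S ⊓ K) ∖ E[H])/Φ(K)`. -/
def IsAugmentedIn (Γ : G.Subgraph) (A : AugSub G) : Prop :=
  A.1 ≤ Γ ∧
  (∀ H : G.Subgraph, H ≤ Γ → H.verts.Finite → IsEquivRelOn (bdry G Γ H) (A.2 H)) ∧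
  (∀ H K : G.Subgraph, H ≤ K → K ≤ Γ → K.verts.Finite →
    ∀ u v, u ∈ bdry G Γ H → v ∈ bdry G Γ H →
      (A.2 H u v ↔
        quotConn G ((A.1 ⊓ K).deleteEdges H.edgeSet)
          (restrictRel (bdry G Γ K) (A.2 K)) u v))

/-- The data of an augmented subgraph `(S, Φ)` determined outside the finite subgraph `H`:
the subgraph `S ∖ E[H]` together with the family `Φ_H = (Φ(K) : K ⊇ H finite)`. -/
def outsideMap (Γ H : G.Subgraph) (A : AugSub G) :
    G.Subgraph × (G.Subgraph → V → V → Prop) :=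
  (A.1.deleteEdges H.edgeSet,
    fun K u v => (H ≤ K ∧ K ≤ Γ ∧ K.verts.Finite) ∧ A.2 K u v)

/-- The σ-algebra `𝒢_H` on augmented subgraphs generated by `(S, Φ) ↦ (S ∖ E[H], Φ_H)`. -/
def outSigma (Γ H : G.Subgraph) : MeasurableSpace (AugSub G) :=
  MeasurableSpace.comap (outsideMap G Γ H) inferInstance

/-- A tail event: an event belonging to `𝒢_H` for every finite subgraph `H`. -/
def IsTailEvent (Γ : G.Subgraph) (X : Set (AugSub G)) : Prop :=
  ∀ H : G.Subgraph, H ≤ Γ → H.verts.Finite → MeasurableSet[outSigma G Γ H] X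

/-- `Q` is an augmented `β`-arboreal gas Gibbs measure on the host graph `Γ ≤ G`:
a probability measure on augmented subgraphs of `Γ` such that for every finite subgraph `H`
of `Γ` and every subgraph `F₀` of `H`, the conditional probability of `{A ∩ H = F₀}` given
`𝒢_H` is almost surely `P^{Φ(H)}_{H,β}(F₀)`. -/
def IsAugGibbs (β : ℝ≥0∞) (Γ : G.Subgraph) (Q : Measure (AugSub G)) : Prop :=
  IsProbabilityMeasure Q ∧
  Q {A : AugSub G | IsAugmentedIn G Γ A} = 1 ∧
  ∀ H : G.Subgraph, H ≤ Γ → H.verts.Finite →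
    ∀ F₀ : G.Subgraph, F₀ ≤ H →
      (Q[({A : AugSub G | A.1 ⊓ H = F₀}).indicator (fun _ => (1 : ℝ)) | outSigma G Γ H])
        =ᵐ[Q] fun A => (finGibbs G β Γ H (A.2 H) {F₀}).toReal

/-- `P` is a `β`-arboreal gas Gibbs measure on the host graph `Γ ≤ G`: the pushforward of
some augmented `β`-arboreal gas Gibbs measure (a Gibbs augmentation of `P`) under
`(S, Φ) ↦ S`. -/
def IsGibbs (β : ℝ≥0∞) (Γ : G.Subgraph) (P : Measure G.Subgraph) : Prop :=
  ∃ Q : Measure (AugSub G), IsAugGibbs G β Γ Q ∧ Q.map Prod.fst = P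

/-- The finite subgraph with vertex set `{u, v}` and no edges. -/
def pairSub (u v : V) : G.Subgraph where
  verts := {u, v}
  Adj _ _ := False
  adj_sub h := h.elim
  edge_vert h := h.elim
  symm := ⟨fun _ _ h => h.elim⟩

/-- The augmented connectivity relation of an augmented subgraph `(S, Φ)`:
`u ↔ v` iff `Φ({u,v})(u,v) = 1`. -/
def augConn (A : AugSub G) (u v : V) : Prop :=
  A.2 (pairSub G u v) u v

/-- The subgraph of `G` induced by a set `I` of vertices. -/
def traceSub (I : Set V) : G.Subgraph where
  verts := I
  Adj u v := G.Adj u v ∧ u ∈ I ∧ v ∈ I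
  adj_sub h := h.1
  edge_vert h := h.2.1
  symm := ⟨fun _ _ h => ⟨h.1.symm, h.2.2, h.2.1⟩⟩

/-- A subgraph is connected: nonempty vertex set, any two vertices joined by a path. -/
def SubConnected (S : G.Subgraph) : Prop :=
  S.verts.Nonempty ∧ ∀ u ∈ S.verts, ∀ v ∈ S.verts, Relation.ReflTransGen S.Adj u v

/-- The hypercubic lattice `ℤ^d`: vertices `Fin d → ℤ`, edges between points at
`ℓ¹`-distance one. -/
def ZdGraph (d : ℕ) : SimpleGraph (Fin d → ℤ) where
  Adj x y := ∑ i, (x i - y i).natAbs = 1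
  symm := ⟨by
    intro x y h
    rw [← h]
    exact Finset.sum_congr rfl fun i _ => by omega⟩
  loopless := ⟨by intro x h; simp at h⟩

/-- Translation of subgraphs of `ℤ^d` by a lattice vector `t`. -/
def translateSub {d : ℕ} (t : Fin d → ℤ) (S : (ZdGraph d).Subgraph) : (ZdGraph d).Subgraph where
  verts := {v | v - t ∈ S.verts}
  Adj u v := S.Adj (u - t) (v - t)
  adj_sub := by
    intro u v h
    have h2 := S.adj_sub h
    simpa [ZdGraph, sub_sub_sub_cancel_right] using h2
  edge_vert := by intro u v h; exact S.edge_vert h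
  symm := ⟨fun _ _ h => h.symm⟩

/-- Translation of augmented subgraphs of `ℤ^d` by a lattice vector `t`:
`(τ_t Φ)(H)(u,v) = Φ(H - t)(u - t, v - t)`. -/
def translateAug {d : ℕ} (t : Fin d → ℤ) (A : AugSub (ZdGraph d)) : AugSub (ZdGraph d) :=
  (translateSub t A.1, fun K u v => A.2 (translateSub (-t) K) (u - t) (v - t))

/-- A translation-invariant augmented `β`-arboreal gas Gibbs measure on `ℤ^d`. -/
def IsTransInvAugGibbs (d : ℕ) (β : ℝ≥0∞) (Q : Measure (AugSub (ZdGraph d))) : Prop :=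
  IsAugGibbs (ZdGraph d) β ⊤ Q ∧ ∀ t, Q.map (translateAug t) = Q

/-- An extremal point of the convex set of translation-invariant augmented `β`-arboreal gas
Gibbs measures on `ℤ^d`. -/
def IsExtremalTransInvAugGibbs (d : ℕ) (β : ℝ≥0∞)
    (Q : Measure (AugSub (ZdGraph d))) : Prop :=
  IsTransInvAugGibbs d β Q ∧
    ∀ (Q₁ Q₂ : Measure (AugSub (ZdGraph d))) (t : ℝ≥0∞), 0 < t → t < 1 →
      IsTransInvAugGibbs d β Q₁ → IsTransInvAugGibbs d β Q₂ →
      Q = t • Q₁ + (1 - t) • Q₂ → Q₁ = Q₂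

end ArborealGas

/-!
Conditioning on an event `X` that is `𝒢_H`-measurable commutes with conditional expectation
given `𝒢_H`: in the set integrals characterising `Q[·|𝒢_H]` over `𝒢_H`-sets `s`, conditioning only
replaces `s` by the `𝒢_H`-set `s ∩ X` and multiplies by `(Q X)⁻¹`. A tail event is
`𝒢_H`-measurable for every finite `H`, so every DLR equation of `Q` holds `Q(·|X)`-a.e.
-/

namespace ProbabilityTheory

variable {Ω : Type*} {m m0 : MeasurableSpace Ω} {μ : Measure Ω} {s t : Set Ω}

/-- `t` need not be measurable; the set of augmented subgraphs is not known to be. -/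
lemma cond_apply_eq_one_of_measure_eq_one [IsProbabilityMeasure μ] (hs : MeasurableSet s)
    (hμs : μ s ≠ 0) (ht : μ t = 1) : μ[t|s] = 1 := by
  have hinter : μ (t ∩ s) = μ s := by
    simpa using Measure.measure_inter_eq_of_measure_eq hs (ht.trans measure_univ.symm)
      (Set.subset_univ t) (measure_ne_top μ t)
  rw [cond_apply hs, Set.inter_comm, hinter, ENNReal.inv_mul_cancel hμs (measure_ne_top μ s)]

lemma condExp_cond_ae_eq [IsFiniteMeasure μ] (hm : m ≤ m0) (hs : MeasurableSet[m] s)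
    {f : Ω → ℝ} (hf : Integrable f μ) : μ[|s][f|m] =ᵐ[μ[|s]] μ[f|m] := by
  by_cases hμs : μ s = 0
  · simp [cond_eq_zero_of_meas_eq_zero hμs, Filter.EventuallyEq]
  have := cond_isProbabilityMeasure_of_finite hμs (measure_ne_top μ s)
  have hsetIntegral : ∀ g : Ω → ℝ, ∀ t, MeasurableSet t →
      ∫ x in t, g x ∂μ[|s] = (μ s)⁻¹.toReal • ∫ x in t ∩ s, g x ∂μ := fun g t ht => by
    rw [cond, Measure.restrict_smul, Measure.restrict_restrict ht, integral_smul_measure]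
  have hcond_int : Integrable (μ[f|m]) μ[|s] :=
    integrable_condExp.restrict.smul_measure (ENNReal.inv_ne_top.mpr hμs)
  refine (ae_eq_condExp_of_forall_setIntegral_eq (μ := μ[|s]) hm
    (hf.restrict.smul_measure (ENNReal.inv_ne_top.mpr hμs))
    (fun _ _ _ => hcond_int.integrableOn) (fun t ht _ => ?_)
    stronglyMeasurable_condExp.aestronglyMeasurable).symm
  rw [hsetIntegral _ t (hm t ht), hsetIntegral _ t (hm t ht),
    setIntegral_condExp hm hf (ht.inter hs)]

end ProbabilityTheory

namespace ArborealGas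

variable {V : Type*} {G : SimpleGraph V}

lemma measurable_subgraphData :
    Measurable fun S : G.Subgraph =>
      (((fun v => v ∈ S.verts), S.Adj) : (V → Prop) × (V → V → Prop)) :=
  Measurable.of_comap_le le_rfl

lemma measurable_mem_verts (v : V) : Measurable fun S : G.Subgraph => v ∈ S.verts :=
  (measurable_pi_apply v).comp measurable_subgraphData.fst

lemma measurable_adj (u v : V) : Measurable fun S : G.Subgraph => S.Adj u v :=
  (measurable_pi_apply v).comp ((measurable_pi_apply u).comp measurable_subgraphData.snd)

lemma measurable_subgraph_of {α : Type*} [MeasurableSpace α] {f : α → G.Subgraph}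
    (hverts : ∀ v, Measurable fun a => v ∈ (f a).verts)
    (hadj : ∀ u v, Measurable fun a => (f a).Adj u v) : Measurable f :=
  Measurable.of_comap_le <| le_of_eq_of_le MeasurableSpace.comap_comp
    ((measurable_pi_lambda _ hverts).prodMk
      (measurable_pi_lambda _ fun u => measurable_pi_lambda _ (hadj u))).comap_le

lemma measurable_deleteEdges (s : Set (Sym2 V)) :
    Measurable fun S : G.Subgraph => S.deleteEdges s :=
  measurable_subgraph_of measurable_mem_verts fun u v => by
    simp only [SimpleGraph.Subgraph.deleteEdges_adj]
    exact (measurable_adj u v).and measurable_const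

lemma measurable_inf_const (H : G.Subgraph) : Measurable fun S : G.Subgraph => S ⊓ H :=
  measurable_subgraph_of (fun v => by
      simp only [SimpleGraph.Subgraph.verts_inf, Set.mem_inter_iff]
      exact (measurable_mem_verts v).and measurable_const)
    fun u v => by
      simp only [SimpleGraph.Subgraph.inf_adj]
      exact (measurable_adj u v).and measurable_const

instance [Countable V] : MeasurableSingletonClass G.Subgraph where
  measurableSet_singleton F := by
    have hinj : Function.Injective fun S : G.Subgraph =>
        (((fun v => v ∈ S.verts), S.Adj) : (V → Prop) × (V → V → Prop)) :=
      fun _ _ h => SimpleGraph.Subgraph.ext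
        (Set.ext fun v => iff_of_eq (congrFun (congrArg Prod.fst h) v)) (congrArg Prod.snd h)
    rw [← hinj.preimage_image {F}, Set.image_singleton]
    exact measurable_subgraphData (measurableSet_singleton _)

lemma measurable_outsideMap (Γ H : G.Subgraph) : Measurable (outsideMap G Γ H) :=
  ((measurable_deleteEdges _).comp measurable_fst).prodMk <|
    measurable_pi_lambda _ fun K => measurable_pi_lambda _ fun u => measurable_pi_lambda _ fun v =>
      measurable_const.and <| (measurable_pi_apply v).comp <| (measurable_pi_apply u).comp <|
        (measurable_pi_apply K).comp measurable_snd

lemma outSigma_le (Γ H : G.Subgraph) :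
    outSigma G Γ H ≤ (inferInstance : MeasurableSpace (AugSub G)) :=
  (measurable_outsideMap Γ H).comap_le

lemma IsTailEvent.measurableSet {Γ : G.Subgraph} {X : Set (AugSub G)} (hX : IsTailEvent G Γ X) :
    MeasurableSet X :=
  outSigma_le Γ ⊥ _ (hX ⊥ bot_le (by simp))

lemma measurableSet_fst_inf_eq [Countable V] (H F₀ : G.Subgraph) :
    MeasurableSet {A : AugSub G | A.1 ⊓ H = F₀} :=
  (measurable_inf_const H).comp measurable_fst (measurableSet_singleton F₀)

theorem condition_on_tail_event_general
    {V : Type*} [Countable V] (G : SimpleGraph V)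
    (β : ℝ≥0∞) (Q : Measure (AugSub G)) (hQ : IsAugGibbs G β ⊤ Q)
    (X : Set (AugSub G)) (hX : IsTailEvent G ⊤ X) (hpos : 0 < Q X) :
    IsAugGibbs G β ⊤ (ProbabilityTheory.cond Q X) := by
  obtain ⟨hQprob, hQaug, hQdlr⟩ := hQ
  refine ⟨ProbabilityTheory.cond_isProbabilityMeasure hpos.ne',
    ProbabilityTheory.cond_apply_eq_one_of_measure_eq_one hX.measurableSet hpos.ne' hQaug,
    fun H hH hHfin F₀ hF₀ => ?_⟩
  have hind : Integrable ({A : AugSub G | A.1 ⊓ H = F₀}.indicator fun _ => (1 : ℝ)) Q :=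
    (integrable_const 1).indicator (measurableSet_fst_inf_eq H F₀)
  exact (ProbabilityTheory.condExp_cond_ae_eq (outSigma_le ⊤ H) (hX H hH hHfin) hind).trans
    (ProbabilityTheory.cond_absolutelyContinuous.ae_eq (hQdlr H hH hHfin F₀ hF₀))

/-- Lemma: conditioning on a tail event. Let `G` be a countable, locally
finite graph and `β ∈ [0,∞]`, and let `Q` be an augmented `β`-arboreal gas Gibbs measure
on `G`. If `X ∈ 𝒯` is a tail event with `Q(X) > 0`, then `Q(·|X)` is also an augmented
`β`-arboreal gas Gibbs measure on `G`. -/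
theorem condition_on_tail_event
    {V : Type*} [Countable V] (G : SimpleGraph V)
    (hlf : ∀ v : V, (G.neighborSet v).Finite)
    (β : ℝ≥0∞) (Q : Measure (AugSub G)) (hQ : IsAugGibbs G β ⊤ Q)
    (X : Set (AugSub G)) (hX : IsTailEvent G ⊤ X) (hpos : 0 < Q X) :
    IsAugGibbs G β ⊤ (ProbabilityTheory.cond Q X) :=
  condition_on_tail_event_general G β Q hQ X hX hpos

end ArborealGas

end
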